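/- arXiv:1205.3285 — 7 statements merged into one kernel-verified Lean document; each statement's English description precedes it below -/
import Mathlib

section
/- In the block setting, assume A₁A₂ ≠ 0 and that there are indices i, j such that the i-th column b₁ⁱ of B₁ and the j-th column b₂ʲ of B₂ satisfy (b₁ⁱ)ᵀĨb₂ʲ ≠ 0. Then the four columns b₁ⁱ, b₁ʲ, b₂ⁱ, b₂ʲ are linearly independent, rk B₁ ≥ 2, and, writing p for the number of +1 entries and q for the number of −1 entries on the diagonal of Ĩ, one has p ≥ rk B₁ and q ≥ rk B₁; in particular m ≥ 2·rk B₁ ≥ 4. -/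
open Matrix

noncomputable section

/-- Vectors of `ℝⁿ` (`n = 2k + m`) written as triples `(u, w, u*)`. -/
abbrev BV (k m : ℕ) := (Fin k → ℝ) × (Fin m → ℝ) × (Fin k → ℝ)

/-- The linear map `A : (u, w, u*) ↦ (-BᵀĨw + Cu*, Bu*, 0)` of the block setting,
where `Ĩ = diagonal ε`. -/
def Amap {k m : ℕ} (ε : Fin m → ℝ) (B : Matrix (Fin m) (Fin k) ℝ)
    (C : Matrix (Fin k) (Fin k) ℝ) (x : BV k m) : BV k m :=
  (-((Bᵀ * Matrix.diagonal ε) *ᵥ x.2.1) + C *ᵥ x.2.2, B *ᵥ x.2.2, 0)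

/-!
Write `β(x, y) = xᵀĨy`. The columns of `B₁` span a `β`-isotropic subspace, so restricting to the
coordinates where `Ĩ = +1` (resp. `−1`) is injective on it: a vector of the kernel has
`β(x, x) = −∑ x_r²` (resp. `+∑ x_r²`) equal to `0`. This gives `p, q ≥ rk B₁`.
For the independence of `b₁ⁱ, b₁ʲ, b₂ⁱ, b₂ʲ`, isotropy of both `B`'s and skewness of `B₁ᵀĨB₂`
make their pairing matrix with `b₂ʲ, b₂ⁱ, b₁ʲ, b₁ⁱ` diagonal with entries `±(b₁ⁱ)ᵀĨb₂ʲ ≠ 0`.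
-/

open Finset

theorem transpose_mul_mul_apply_eq_toBilin' {K m n : Type*} [CommRing K] [Fintype m] [DecidableEq m]
    [Fintype n] [DecidableEq n] (M : Matrix m m K) (B B' : Matrix m n K) (a b : n) :
    (Bᵀ * M * B') a b = toBilin' M (Bᵀ a) (B'ᵀ b) := by
  rw [← toBilin'_single (Bᵀ * M * B'), ← toBilin'_comp]
  simp only [LinearMap.BilinForm.comp_apply, toLin'_apply, mulVec_single_one, col_def]

theorem toBilin'_mulVec_self_eq_zero {K m n : Type*} [CommRing K] [Fintype m] [DecidableEq m]
    [Fintype n] [DecidableEq n] {M : Matrix m m K} {B : Matrix m n K} (hB : Bᵀ * M * B = 0)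
    (u : n → K) :
    toBilin' M (B *ᵥ u) (B *ᵥ u) = 0 := by
  simpa [hB] using congrArg (fun β => β u u) (toBilin'_comp M B B)

theorem linearIndependent_of_biorthogonal {K M ι : Type*} [Field K] [AddCommGroup M]
    [Module K M] [Fintype ι] (β : LinearMap.BilinForm K M) {v w : ι → M}
    (hvw : ∀ a b, a ≠ b → β (v a) (w b) = 0) (hvv : ∀ a, β (v a) (w a) ≠ 0) :
    LinearIndependent K v := by
  rw [Fintype.linearIndependent_iff]
  intro g hg a
  have hpair : ∑ b, g b * β (v b) (w a) = 0 := by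
    simpa [map_sum] using congrArg (fun x => β x (w a)) hg
  rw [Finset.sum_eq_single a (fun b _ hb => by rw [hvw b a hb, mul_zero])
    (fun h => absurd (Finset.mem_univ a) h)] at hpair
  exact (mul_eq_zero.mp hpair).resolve_right (hvv a)

theorem linearIndependent_four_of_isotropic {K M ι : Type*} [Field K] [CharZero K]
    [AddCommGroup M] [Module K M] {β : LinearMap.BilinForm K M} (hβ : β.IsSymm) {x y : ι → M}
    (hx : ∀ a b, β (x a) (x b) = 0) (hy : ∀ a b, β (y a) (y b) = 0)
    (hxy : ∀ a b, β (x a) (y b) = -β (x b) (y a)) {i j : ι} (hij : β (x i) (y j) ≠ 0) :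
    LinearIndependent K ![x i, x j, y i, y j] := by
  have hxy_self (a : ι) : β (x a) (y a) = 0 := self_eq_neg.mp (hxy a a)
  have hyx (a b : ι) : β (y a) (x b) = -β (x a) (y b) := by rw [← hβ.eq, hxy]
  refine linearIndependent_of_biorthogonal β (w := ![y j, y i, x j, x i]) ?_ ?_
  · intro a b hab
    fin_cases a <;> fin_cases b <;> simp [hx, hy, hyx, hxy_self] at hab ⊢
  · intro a
    fin_cases a <;> simp [hyx, hxy j i, hij]

theorem two_le_rank_of_linearIndependent {K m n : Type*} [Field K] [Fintype m] [Fintype n]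
    {B : Matrix m n K} {i j : n} (h : LinearIndependent K ![Bᵀ i, Bᵀ j]) : 2 ≤ B.rank := by
  rw [rank_eq_finrank_span_cols]
  calc 2 = Module.finrank K (Submodule.span K (Set.range ![Bᵀ i, Bᵀ j])) := by
        rw [finrank_span_eq_card h, Fintype.card_fin]
    _ ≤ Module.finrank K (Submodule.span K (Set.range B.col)) :=
        Submodule.finrank_mono <| Submodule.span_mono <|
          Set.range_subset_iff.mpr (Fin.forall_fin_two.mpr ⟨⟨i, rfl⟩, ⟨j, rfl⟩⟩)

section Sign

variable {K ι : Type*} [Field K] [LinearOrder K] [IsStrictOrderedRing K] [Fintype ι] [DecidableEq ι]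
  {ε : ι → K}

theorem finrank_le_card_pos_of_isotropic (hε : ∀ r, ε r ≠ 0) {V : Submodule K (ι → K)}
    (hV : ∀ x ∈ V, toBilin' (diagonal ε) x x = 0) :
    Module.finrank K V ≤ #{r | 0 < ε r} := by
  let restrict : V →ₗ[K] ({r // 0 < ε r} → K) :=
    (LinearMap.funLeft K K Subtype.val).comp V.subtype
  have hinj : Function.Injective restrict := by
    rw [← LinearMap.ker_eq_bot, Submodule.eq_bot_iff]
    rintro ⟨x, hx⟩ hker
    have hpos (r) (hr : 0 < ε r) : x r = 0 := congrFun (LinearMap.mem_ker.mp hker) ⟨r, hr⟩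
    have hterm (r) : ε r * x r * x r ≤ 0 := by
      rcases (hε r).lt_or_gt with hr | hr
      · nlinarith [mul_self_nonneg (x r)]
      · simp [hpos r hr]
    have hsum : ∑ r, ε r * x r * x r = 0 := by
      simpa [toBilin'_apply', dotProduct, mulVec_diagonal, mul_comm, mul_left_comm] using hV x hx
    ext r
    have := (Finset.sum_eq_zero_iff_of_nonpos fun r _ => hterm r).mp hsum r (Finset.mem_univ r)
    simpa [hε r] using this
  calc Module.finrank K V ≤ Module.finrank K ({r // 0 < ε r} → K) :=
        LinearMap.finrank_le_finrank_of_injective hinj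
    _ = #{r | 0 < ε r} := by simp [Fintype.card_subtype]

theorem rank_le_card_pos_of_transpose_mul_diagonal_mul_self_eq_zero {n : Type*} [Fintype n]
    [DecidableEq n] (hε : ∀ r, ε r ≠ 0) {B : Matrix ι n K} (hB : Bᵀ * diagonal ε * B = 0) :
    B.rank ≤ #{r | 0 < ε r} :=
  finrank_le_card_pos_of_isotropic hε <| by
    rintro _ ⟨u, rfl⟩
    exact toBilin'_mulVec_self_eq_zero hB u

theorem rank_le_card_neg_of_transpose_mul_diagonal_mul_self_eq_zero {n : Type*} [Fintype n]
    [DecidableEq n] (hε : ∀ r, ε r ≠ 0) {B : Matrix ι n K} (hB : Bᵀ * diagonal ε * B = 0) :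
    B.rank ≤ #{r | ε r < 0} := by
  have hB' : Bᵀ * diagonal (-ε) * B = 0 := by
    rw [show diagonal (-ε) = -diagonal ε from (diagonal_neg ε).symm, Matrix.mul_neg,
      Matrix.neg_mul, hB, neg_zero]
  simpa using rank_le_card_pos_of_transpose_mul_diagonal_mul_self_eq_zero (ε := -ε)
    (fun r => neg_ne_zero.mpr (hε r)) hB'

end Sign

theorem card_pos_add_card_neg_le {α ι : Type*} [Fintype ι] [LinearOrder α] [Zero α] (f : ι → α) :
    #{r | 0 < f r} + #{r | f r < 0} ≤ Fintype.card ι := by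
  classical
  rw [← card_union_of_disjoint (disjoint_filter.mpr fun r _ h => h.asymm)]
  exact card_le_univ _

theorem witt_index_bound_general (k m : ℕ)
    (ε : Fin m → ℝ) (hε : ∀ i, ε i = 1 ∨ ε i = -1)
    (B₁ B₂ : Matrix (Fin m) (Fin k) ℝ)
    (hB₁ : B₁ᵀ * Matrix.diagonal ε * B₁ = 0)
    (hB₂ : B₂ᵀ * Matrix.diagonal ε * B₂ = 0)
    (hskew : (B₁ᵀ * Matrix.diagonal ε * B₂)ᵀ = -(B₁ᵀ * Matrix.diagonal ε * B₂))
    (i j : Fin k) (hij : (B₁ᵀ i) ⬝ᵥ (Matrix.diagonal ε *ᵥ (B₂ᵀ j)) ≠ 0) :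
    LinearIndependent ℝ ![B₁ᵀ i, B₁ᵀ j, B₂ᵀ i, B₂ᵀ j] ∧
    2 ≤ B₁.rank ∧
    B₁.rank ≤ (Finset.univ.filter fun r : Fin m => ε r = 1).card ∧
    B₁.rank ≤ (Finset.univ.filter fun r : Fin m => ε r = -1).card ∧
    2 * B₁.rank ≤ m ∧ 4 ≤ 2 * B₁.rank := by
  have hgram {B B' : Matrix (Fin m) (Fin k) ℝ} (a b : Fin k) :=
    transpose_mul_mul_apply_eq_toBilin' (diagonal ε) B B' a b
  have hli : LinearIndependent ℝ ![B₁ᵀ i, B₁ᵀ j, B₂ᵀ i, B₂ᵀ j] := by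
    refine linearIndependent_four_of_isotropic
      (isSymm_toBilin'_iff_isSymm.mpr (isSymm_diagonal ε))
      (fun a b => by rw [← hgram, hB₁]; rfl) (fun a b => by rw [← hgram, hB₂]; rfl)
      (fun a b => ?_) (by rwa [toBilin'_apply'])
    simpa only [transpose_apply, Matrix.neg_apply, hgram] using congrFun (congrFun hskew b) a
  have hpair : LinearIndependent ℝ ![B₁ᵀ i, B₁ᵀ j] := by
    convert hli.comp ![0, 1] (by decide) using 1
    ext a; fin_cases a <;> rfl
  have hrank := two_le_rank_of_linearIndependent hpair
  have hne (r : Fin m) : ε r ≠ 0 := by rcases hε r with h | h <;> norm_num [h]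
  have hpos : #{r | ε r = 1} = #{r | 0 < ε r} := by
    congr 1; exact filter_congr fun r _ => by rcases hε r with h | h <;> norm_num [h]
  have hneg : #{r | ε r = -1} = #{r | ε r < 0} := by
    congr 1; exact filter_congr fun r _ => by rcases hε r with h | h <;> norm_num [h]
  have hsum := card_pos_add_card_neg_le ε
  have hp := rank_le_card_pos_of_transpose_mul_diagonal_mul_self_eq_zero hne hB₁
  have hq := rank_le_card_neg_of_transpose_mul_diagonal_mul_self_eq_zero hne hB₁
  rw [Fintype.card_fin] at hsum
  exact ⟨hli, hrank, hpos ▸ hp, hneg ▸ hq, by omega, by omega⟩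

/-- if `A₁A₂ ≠ 0` and columns `b₁ⁱ`, `b₂ʲ` satisfy
`(b₁ⁱ)ᵀĨb₂ʲ ≠ 0`, then `b₁ⁱ, b₁ʲ, b₂ⁱ, b₂ʲ` are linearly independent,
`rk B₁ ≥ 2`, the numbers `p`, `q` of `+1`'s and `-1`'s of `Ĩ` satisfy
`p, q ≥ rk B₁`, and `m ≥ 2 rk B₁ ≥ 4`. -/
theorem witt_index_bound (k m : ℕ) (hk : 1 ≤ k) (hm : 1 ≤ m)
    (ε : Fin m → ℝ) (hε : ∀ i, ε i = 1 ∨ ε i = -1)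
    (B₁ B₂ : Matrix (Fin m) (Fin k) ℝ)
    (hB₁ : B₁ᵀ * Matrix.diagonal ε * B₁ = 0)
    (hB₂ : B₂ᵀ * Matrix.diagonal ε * B₂ = 0)
    (C₁ C₂ : Matrix (Fin k) (Fin k) ℝ) (hC₁ : C₁ᵀ = -C₁) (hC₂ : C₂ᵀ = -C₂)
    (u₁ u₂ u₁s u₂s u₃ : Fin k → ℝ) (w₁ w₂ : Fin m → ℝ) (v₁ v₂ v₃ : BV k m)
    (hv₁ : v₁ = (u₁, w₁, u₁s)) (hv₂ : v₂ = (u₂, w₂, u₂s)) (hv₃ : v₃ = (u₃, 0, 0))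
    (hA₁v₁ : Amap ε B₁ C₁ v₁ = 0) (hA₂v₂ : Amap ε B₂ C₂ v₂ = 0)
    (hskew : (B₁ᵀ * Matrix.diagonal ε * B₂)ᵀ = -(B₁ᵀ * Matrix.diagonal ε * B₂))
    (h12 : (2 : ℝ) • Amap ε B₁ C₁ v₂ = v₃)
    (h21 : (-2 : ℝ) • Amap ε B₂ C₂ v₁ = v₃)
    (hA₁A₂ : (fun x => Amap ε B₁ C₁ (Amap ε B₂ C₂ x)) ≠ fun _ : BV k m => (0 : BV k m))
    (i j : Fin k) (hij : (B₁ᵀ i) ⬝ᵥ (Matrix.diagonal ε *ᵥ (B₂ᵀ j)) ≠ 0) :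
    LinearIndependent ℝ ![B₁ᵀ i, B₁ᵀ j, B₂ᵀ i, B₂ᵀ j] ∧
    2 ≤ B₁.rank ∧
    B₁.rank ≤ (Finset.univ.filter fun r : Fin m => ε r = 1).card ∧
    B₁.rank ≤ (Finset.univ.filter fun r : Fin m => ε r = -1).card ∧
    2 * B₁.rank ≤ m ∧ 4 ≤ 2 * B₁.rank :=
  witt_index_bound_general k m ε hε B₁ B₂ hB₁ hB₂ hskew i j hij

end
end

section
/- In the block setting, if u₃ lies in the column space of the matrix B₁ᵀĨB₂, then the affine map γ₃ : x ↦ x + 2A₁A₂x + v₃ has a fixed point in ℝⁿ. -/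
open Matrix

noncomputable section

theorem Amap_Amap {k m : ℕ} (ε : Fin m → ℝ) (B₁ B₂ : Matrix (Fin m) (Fin k) ℝ)
    (C₁ C₂ : Matrix (Fin k) (Fin k) ℝ) (x : BV k m) :
    Amap ε B₁ C₁ (Amap ε B₂ C₂ x) = (-((B₁ᵀ * diagonal ε * B₂) *ᵥ x.2.2), 0, 0) := by
  simp [Amap, Matrix.mul_assoc, ← mulVec_mulVec]

theorem Amap_Amap_half_smul {k m : ℕ} (ε : Fin m → ℝ) (B₁ B₂ : Matrix (Fin m) (Fin k) ℝ)
    (C₁ C₂ : Matrix (Fin k) (Fin k) ℝ) (z : Fin k → ℝ) :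
    (2 : ℝ) • Amap ε B₁ C₁ (Amap ε B₂ C₂ (0, 0, (2 : ℝ)⁻¹ • z)) =
      (-((B₁ᵀ * diagonal ε * B₂) *ᵥ z), 0, 0) := by
  rw [Amap_Amap, mulVec_smul]
  ext <;> simp

theorem fixed_point_of_u3_in_image_general (k m : ℕ)
    (ε : Fin m → ℝ)
    (B₁ B₂ : Matrix (Fin m) (Fin k) ℝ)
    (C₁ C₂ : Matrix (Fin k) (Fin k) ℝ)
    (u₃ : Fin k → ℝ) (v₃ : BV k m)
    (hv₃ : v₃ = (u₃, 0, 0))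
    (hu₃ : ∃ z : Fin k → ℝ, (B₁ᵀ * Matrix.diagonal ε * B₂) *ᵥ z = u₃) :
    ∃ x : BV k m, x + (2 : ℝ) • Amap ε B₁ C₁ (Amap ε B₂ C₂ x) + v₃ = x := by
  obtain ⟨z, hz⟩ := hu₃
  refine ⟨(0, 0, (2 : ℝ)⁻¹ • z), ?_⟩
  rw [Amap_Amap_half_smul, hv₃, hz, add_assoc]
  simp

/-- if `u₃` lies in the column space of `B₁ᵀĨB₂`, then
`γ₃ : x ↦ x + 2A₁A₂x + v₃` has a fixed point. -/
theorem fixed_point_of_u3_in_image (k m : ℕ) (hk : 1 ≤ k) (hm : 1 ≤ m)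
    (ε : Fin m → ℝ) (hε : ∀ i, ε i = 1 ∨ ε i = -1)
    (B₁ B₂ : Matrix (Fin m) (Fin k) ℝ)
    (hB₁ : B₁ᵀ * Matrix.diagonal ε * B₁ = 0)
    (hB₂ : B₂ᵀ * Matrix.diagonal ε * B₂ = 0)
    (C₁ C₂ : Matrix (Fin k) (Fin k) ℝ) (hC₁ : C₁ᵀ = -C₁) (hC₂ : C₂ᵀ = -C₂)
    (u₁ u₂ u₁s u₂s u₃ : Fin k → ℝ) (w₁ w₂ : Fin m → ℝ) (v₁ v₂ v₃ : BV k m)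
    (hv₁ : v₁ = (u₁, w₁, u₁s)) (hv₂ : v₂ = (u₂, w₂, u₂s)) (hv₃ : v₃ = (u₃, 0, 0))
    (hA₁v₁ : Amap ε B₁ C₁ v₁ = 0) (hA₂v₂ : Amap ε B₂ C₂ v₂ = 0)
    (hskew : (B₁ᵀ * Matrix.diagonal ε * B₂)ᵀ = -(B₁ᵀ * Matrix.diagonal ε * B₂))
    (h12 : (2 : ℝ) • Amap ε B₁ C₁ v₂ = v₃)
    (h21 : (-2 : ℝ) • Amap ε B₂ C₂ v₁ = v₃)
    (hu₃ : ∃ z : Fin k → ℝ, (B₁ᵀ * Matrix.diagonal ε * B₂) *ᵥ z = u₃) :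
    ∃ x : BV k m, x + (2 : ℝ) • Amap ε B₁ C₁ (Amap ε B₂ C₂ x) + v₃ = x :=
  fixed_point_of_u3_in_image_general k m ε B₁ B₂ C₁ C₂ u₃ v₃ hv₃ hu₃

end
end

section
/- In the block setting, assume rk(B₁ᵀĨB₂) = rk B₁ = rk B₂. If the affine map γ₃ has no fixed point in ℝⁿ, then the u*-components of the translation parts satisfy u₁* ≠ 0 and u₂* ≠ 0. -/
open Matrix

noncomputable section

/-! `γ₃` has a fixed point as soon as `u₃` lies in the column space of `M = B₁ᵀĨB₂`.
The rank condition forces this column space to be that of `B₁ᵀĨ`, and (as `Mᵀ = -M`) also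
that of `B₂ᵀĨ`. If `u₂* = 0`, the first component of `2A₁v₂ = v₃` exhibits `u₃` in the
column space of `B₁ᵀĨ`; symmetrically for `u₁* = 0`. -/

namespace Matrix

variable {K : Type*} [Field K] {l m n : Type*}

theorem range_mulVecLin_neg [Fintype n] (M : Matrix m n K) :
    LinearMap.range (-M).mulVecLin = LinearMap.range M.mulVecLin := by
  rw [show (-M).mulVecLin = -M.mulVecLin from LinearMap.ext fun x => neg_mulVec x M,
    LinearMap.range_neg]

theorem range_mulVecLin_mul_eq_of_rank_eq [Fintype m] [Fintype n] (A : Matrix l m K)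
    (B : Matrix m n K) (h : (A * B).rank = A.rank) :
    LinearMap.range (A * B).mulVecLin = LinearMap.range A.mulVecLin := by
  refine Submodule.eq_of_le_of_finrank_eq ?_ h
  rw [mulVecLin_mul]
  exact LinearMap.range_comp_le_range _ _

theorem range_mulVecLin_transpose_mul_mul_eq [Fintype l] [Fintype m] [Fintype n] [DecidableEq m]
    (B : Matrix m l K) (d : m → K) (C : Matrix m n K) (h : (Bᵀ * diagonal d * C).rank = B.rank) :
    LinearMap.range (Bᵀ * diagonal d * C).mulVecLin =
      LinearMap.range (Bᵀ * diagonal d).mulVecLin := by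
  refine range_mulVecLin_mul_eq_of_rank_eq _ _ (le_antisymm (rank_mul_le_left _ _) ?_)
  calc (Bᵀ * diagonal d).rank ≤ Bᵀ.rank := rank_mul_le_left _ _
    _ = (Bᵀ * diagonal d * C).rank := by rw [rank_transpose, h]

theorem transpose_transpose_mul_diagonal_mul [Fintype m] [DecidableEq m] (B : Matrix m l K)
    (d : m → K) (C : Matrix m n K) : (Bᵀ * diagonal d * C)ᵀ = Cᵀ * diagonal d * B := by
  rw [transpose_mul, transpose_mul, transpose_transpose, diagonal_transpose, Matrix.mul_assoc]

end Matrix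

section

variable {k m : ℕ} {ε : Fin m → ℝ}

theorem Amap_fst_mem_range (B : Matrix (Fin m) (Fin k) ℝ) (C : Matrix (Fin k) (Fin k) ℝ)
    {x : BV k m} (hx : x.2.2 = 0) :
    (Amap ε B C x).1 ∈ LinearMap.range (Bᵀ * diagonal ε).mulVecLin :=
  ⟨-x.2.1, by simp only [Amap, hx, mulVecLin_apply, mulVec_neg, mulVec_zero, add_zero]⟩

theorem Amap_Amap_mk_zero_zero (B₁ B₂ : Matrix (Fin m) (Fin k) ℝ)
    (C₁ C₂ : Matrix (Fin k) (Fin k) ℝ) (s : Fin k → ℝ) :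
    Amap ε B₁ C₁ (Amap ε B₂ C₂ (0, 0, s)) = (-((B₁ᵀ * diagonal ε * B₂) *ᵥ s), 0, 0) := by
  simp only [Amap, mulVec_zero, neg_zero, add_zero, zero_add, mulVec_mulVec]

theorem exists_fixed_point_of_mem_range (B₁ B₂ : Matrix (Fin m) (Fin k) ℝ)
    (C₁ C₂ : Matrix (Fin k) (Fin k) ℝ) {u : Fin k → ℝ}
    (hu : u ∈ LinearMap.range (B₁ᵀ * diagonal ε * B₂).mulVecLin) :
    ∃ x : BV k m, x + (2 : ℝ) • Amap ε B₁ C₁ (Amap ε B₂ C₂ x) + (u, 0, 0) = x := by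
  obtain ⟨ξ, rfl⟩ := hu
  refine ⟨(0, 0, (1 / 2 : ℝ) • ξ), ?_⟩
  rw [Amap_Amap_mk_zero_zero, mulVec_smul, mulVecLin_apply]
  ext i <;> simp only [Prod.fst_add, Prod.snd_add, Prod.smul_fst, Prod.smul_snd, Pi.add_apply,
    Pi.smul_apply, Pi.neg_apply, Pi.zero_apply, smul_eq_mul] <;> ring

end

theorem ustar_nonzero_general (k m : ℕ)
    (ε : Fin m → ℝ)
    (B₁ B₂ : Matrix (Fin m) (Fin k) ℝ)
    (C₁ C₂ : Matrix (Fin k) (Fin k) ℝ)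
    (u₁ u₂ u₁s u₂s u₃ : Fin k → ℝ) (w₁ w₂ : Fin m → ℝ) (v₁ v₂ v₃ : BV k m)
    (hv₁ : v₁ = (u₁, w₁, u₁s)) (hv₂ : v₂ = (u₂, w₂, u₂s)) (hv₃ : v₃ = (u₃, 0, 0))
    (hskew : (B₁ᵀ * Matrix.diagonal ε * B₂)ᵀ = -(B₁ᵀ * Matrix.diagonal ε * B₂))
    (h12 : (2 : ℝ) • Amap ε B₁ C₁ v₂ = v₃)
    (h21 : (-2 : ℝ) • Amap ε B₂ C₂ v₁ = v₃)
    (hrk₁ : (B₁ᵀ * Matrix.diagonal ε * B₂).rank = B₁.rank)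
    (hrk₂ : B₁.rank = B₂.rank)
    (hfree : ¬ ∃ x : BV k m, x + (2 : ℝ) • Amap ε B₁ C₁ (Amap ε B₂ C₂ x) + v₃ = x) :
    u₁s ≠ 0 ∧ u₂s ≠ 0 := by
  subst hv₁ hv₂ hv₃
  have hR₁ := range_mulVecLin_transpose_mul_mul_eq _ _ _ hrk₁
  have hR₂ : LinearMap.range (B₁ᵀ * diagonal ε * B₂).mulVecLin =
      LinearMap.range (B₂ᵀ * diagonal ε).mulVecLin := by
    have hrk : (B₂ᵀ * diagonal ε * B₁).rank = B₂.rank := by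
      rw [← transpose_transpose_mul_diagonal_mul, rank_transpose, hrk₁, hrk₂]
    rw [← range_mulVecLin_neg, ← hskew, transpose_transpose_mul_diagonal_mul]
    exact range_mulVecLin_transpose_mul_mul_eq _ _ _ hrk
  have hu₃ : u₃ ∉ LinearMap.range (B₁ᵀ * diagonal ε * B₂).mulVecLin := fun h =>
    hfree (exists_fixed_point_of_mem_range B₁ B₂ C₁ C₂ h)
  constructor
  · rintro rfl
    refine hu₃ (hR₂ ▸ ?_)
    have hu : ((-2 : ℝ) • Amap ε B₂ C₂ (u₁, w₁, 0)).1 = u₃ := congrArg Prod.fst h21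
    rw [← hu]
    exact Submodule.smul_mem _ _ (Amap_fst_mem_range B₂ C₂ rfl)
  · rintro rfl
    refine hu₃ (hR₁ ▸ ?_)
    have hu : ((2 : ℝ) • Amap ε B₁ C₁ (u₂, w₂, 0)).1 = u₃ := congrArg Prod.fst h12
    rw [← hu]
    exact Submodule.smul_mem _ _ (Amap_fst_mem_range B₁ C₁ rfl)

/-- if `rk(B₁ᵀĨB₂) = rk B₁ = rk B₂` and `γ₃` has no fixed point,
then `u₁* ≠ 0` and `u₂* ≠ 0`. -/
theorem ustar_nonzero (k m : ℕ) (hk : 1 ≤ k) (hm : 1 ≤ m)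
    (ε : Fin m → ℝ) (hε : ∀ i, ε i = 1 ∨ ε i = -1)
    (B₁ B₂ : Matrix (Fin m) (Fin k) ℝ)
    (hB₁ : B₁ᵀ * Matrix.diagonal ε * B₁ = 0)
    (hB₂ : B₂ᵀ * Matrix.diagonal ε * B₂ = 0)
    (C₁ C₂ : Matrix (Fin k) (Fin k) ℝ) (hC₁ : C₁ᵀ = -C₁) (hC₂ : C₂ᵀ = -C₂)
    (u₁ u₂ u₁s u₂s u₃ : Fin k → ℝ) (w₁ w₂ : Fin m → ℝ) (v₁ v₂ v₃ : BV k m)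
    (hv₁ : v₁ = (u₁, w₁, u₁s)) (hv₂ : v₂ = (u₂, w₂, u₂s)) (hv₃ : v₃ = (u₃, 0, 0))
    (hA₁v₁ : Amap ε B₁ C₁ v₁ = 0) (hA₂v₂ : Amap ε B₂ C₂ v₂ = 0)
    (hskew : (B₁ᵀ * Matrix.diagonal ε * B₂)ᵀ = -(B₁ᵀ * Matrix.diagonal ε * B₂))
    (h12 : (2 : ℝ) • Amap ε B₁ C₁ v₂ = v₃)
    (h21 : (-2 : ℝ) • Amap ε B₂ C₂ v₁ = v₃)
    (hrk₁ : (B₁ᵀ * Matrix.diagonal ε * B₂).rank = B₁.rank)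
    (hrk₂ : B₁.rank = B₂.rank)
    (hfree : ¬ ∃ x : BV k m, x + (2 : ℝ) • Amap ε B₁ C₁ (Amap ε B₂ C₂ x) + v₃ = x) :
    u₁s ≠ 0 ∧ u₂s ≠ 0 :=
  ustar_nonzero_general k m ε B₁ B₂ C₁ C₂ u₁ u₂ u₁s u₂s u₃ w₁ w₂ v₁ v₂ v₃ hv₁ hv₂ hv₃ hskew h12 h21
    hrk₁ hrk₂ hfree

end
end

section
/- In the block setting, if k = 2 and B₁ᵀĨB₂ ≠ 0 (i.e. A₁A₂ ≠ 0), then the affine map γ₃ has a fixed point in ℝⁿ; in particular, the group generated by the affine isometries γ₁ and γ₂ does not act freely on ℝⁿ. -/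
open Matrix

noncomputable section

/-!
Since `A₂` only sees the `u*`-block and lands in `(·, B₂u*, 0)`, while `A₁` only sees the
`w`- and `u*`-blocks, the product is `A₁A₂(u, w, u*) = (-Du*, 0, 0)` with `D = B₁ᵀĨB₂`.
A nonzero skew-symmetric `2 × 2` matrix is `!![0, a; -a, 0]` with `a ≠ 0`, hence invertible, so
`x = (0, 0, D⁻¹(u₃/2))` is fixed by `γ₃`. The map `γ₃` is not the identity because its linear
part `2A₁A₂` is nonzero.
-/

theorem Matrix.det_fin_two_ne_zero_of_transpose_eq_neg {R : Type*} [CommRing R] [IsDomain R]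
    [CharZero R] {D : Matrix (Fin 2) (Fin 2) R} (hskew : Dᵀ = -D) (hD : D ≠ 0) : D.det ≠ 0 := by
  have entry (i j : Fin 2) : D j i = -D i j := by simpa using congrFun (congrFun hskew i) j
  have h00 : D 0 0 = 0 := add_self_eq_zero.mp (eq_neg_iff_add_eq_zero.mp (entry 0 0))
  have h11 : D 1 1 = 0 := add_self_eq_zero.mp (eq_neg_iff_add_eq_zero.mp (entry 1 1))
  have h01 : D 0 1 ≠ 0 := by
    refine fun h01 => hD (Matrix.ext fun i j => ?_)
    fin_cases i <;> fin_cases j <;> simp [h00, h11, h01, entry 0 1]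
  rw [det_fin_two, h00, h11, entry 0 1]
  simpa using h01

namespace Amap

variable {k m : ℕ} (ε : Fin m → ℝ) (B₁ B₂ : Matrix (Fin m) (Fin k) ℝ)
  (C₁ C₂ : Matrix (Fin k) (Fin k) ℝ)

theorem apply_zero (B : Matrix (Fin m) (Fin k) ℝ) (C : Matrix (Fin k) (Fin k) ℝ) :
    Amap ε B C 0 = 0 := by
  simp [Amap]

theorem comp_apply (x : BV k m) :
    Amap ε B₁ C₁ (Amap ε B₂ C₂ x) = (-((B₁ᵀ * diagonal ε * B₂) *ᵥ x.2.2), 0, 0) := by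
  simp [Amap, mulVec_mulVec, Matrix.mul_assoc]

theorem exists_commutator_fixed_point
    (hD : Function.Surjective (B₁ᵀ * diagonal ε * B₂).mulVec) (u₃ : Fin k → ℝ) :
    ∃ x : BV k m, x + (2 : ℝ) • Amap ε B₁ C₁ (Amap ε B₂ C₂ x) + (u₃, 0, 0) = x := by
  obtain ⟨y, hy⟩ := hD ((1 / 2 : ℝ) • u₃)
  refine ⟨(0, 0, y), ?_⟩
  rw [comp_apply, hy]
  ext i <;> simp

theorem commutator_ne_id (hD : B₁ᵀ * diagonal ε * B₂ ≠ 0) (v : BV k m) :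
    (fun x : BV k m => x + (2 : ℝ) • Amap ε B₁ C₁ (Amap ε B₂ C₂ x) + v) ≠ id := by
  intro h
  have hv : v = 0 := by simpa [apply_zero] using congrFun h 0
  refine hD (ext_of_mulVec_single fun j => ?_)
  have hj := congrArg (·.1) (congrFun h (0, 0, Pi.single j 1))
  rw [zero_mulVec]
  simpa [comp_apply, hv] using hj

end Amap

theorem not_free_of_k_eq_two_general (k m : ℕ) (hk : k = 2)
    (ε : Fin m → ℝ)
    (B₁ B₂ : Matrix (Fin m) (Fin k) ℝ)
    (C₁ C₂ : Matrix (Fin k) (Fin k) ℝ)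
    (u₃ : Fin k → ℝ) (v₃ : BV k m)
    (hv₃ : v₃ = (u₃, 0, 0))
    (hskew : (B₁ᵀ * Matrix.diagonal ε * B₂)ᵀ = -(B₁ᵀ * Matrix.diagonal ε * B₂))
    (hA₁A₂ : B₁ᵀ * Matrix.diagonal ε * B₂ ≠ 0) :
    (∃ x : BV k m, x + (2 : ℝ) • Amap ε B₁ C₁ (Amap ε B₂ C₂ x) + v₃ = x) ∧
    (fun x : BV k m => x + (2 : ℝ) • Amap ε B₁ C₁ (Amap ε B₂ C₂ x) + v₃) ≠ id := by
  subst hk hv₃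
  have hunit : IsUnit (B₁ᵀ * diagonal ε * B₂) :=
    (isUnit_iff_isUnit_det _).mpr (det_fin_two_ne_zero_of_transpose_eq_neg hskew hA₁A₂).isUnit
  exact ⟨Amap.exists_commutator_fixed_point ε B₁ B₂ C₁ C₂
      (mulVec_surjective_iff_isUnit.mpr hunit) u₃,
    Amap.commutator_ne_id ε B₁ B₂ C₁ C₂ hA₁A₂ _⟩

/-- if `k = 2` and `B₁ᵀĨB₂ ≠ 0` (i.e. `A₁A₂ ≠ 0`), then `γ₃` has a
fixed point; in particular `γ₃` is a non-identity element of the group generated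
by `γ₁, γ₂` having a fixed point, so this group does not act freely on `ℝⁿ`. -/
theorem not_free_of_k_eq_two (k m : ℕ) (hk : k = 2) (hm : 1 ≤ m)
    (ε : Fin m → ℝ) (hε : ∀ i, ε i = 1 ∨ ε i = -1)
    (B₁ B₂ : Matrix (Fin m) (Fin k) ℝ)
    (hB₁ : B₁ᵀ * Matrix.diagonal ε * B₁ = 0)
    (hB₂ : B₂ᵀ * Matrix.diagonal ε * B₂ = 0)
    (C₁ C₂ : Matrix (Fin k) (Fin k) ℝ) (hC₁ : C₁ᵀ = -C₁) (hC₂ : C₂ᵀ = -C₂)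
    (u₁ u₂ u₁s u₂s u₃ : Fin k → ℝ) (w₁ w₂ : Fin m → ℝ) (v₁ v₂ v₃ : BV k m)
    (hv₁ : v₁ = (u₁, w₁, u₁s)) (hv₂ : v₂ = (u₂, w₂, u₂s)) (hv₃ : v₃ = (u₃, 0, 0))
    (hA₁v₁ : Amap ε B₁ C₁ v₁ = 0) (hA₂v₂ : Amap ε B₂ C₂ v₂ = 0)
    (hskew : (B₁ᵀ * Matrix.diagonal ε * B₂)ᵀ = -(B₁ᵀ * Matrix.diagonal ε * B₂))
    (h12 : (2 : ℝ) • Amap ε B₁ C₁ v₂ = v₃)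
    (h21 : (-2 : ℝ) • Amap ε B₂ C₂ v₁ = v₃)
    (hA₁A₂ : B₁ᵀ * Matrix.diagonal ε * B₂ ≠ 0) :
    (∃ x : BV k m, x + (2 : ℝ) • Amap ε B₁ C₁ (Amap ε B₂ C₂ x) + v₃ = x) ∧
    (fun x : BV k m => x + (2 : ℝ) • Amap ε B₁ C₁ (Amap ε B₂ C₂ x) + v₃) ≠ id :=
  not_free_of_k_eq_two_general k m hk ε B₁ B₂ C₁ C₂ u₃ v₃ hv₃ hskew hA₁A₂

end
end

section
/- In the block setting, if k = 3, B₁ᵀĨB₂ ≠ 0 (i.e. A₁A₂ ≠ 0), and the sum of the column spaces of B₁ and B₂ has dimension at most 5, then the affine map γ₃ has a fixed point in ℝⁿ. -/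
/-!
For `k = 3` the matrix `S = B₁ᵀĨB₂` is skew-symmetric, so it acts as `p ↦ p × z` for its axis
`z`, and `A₁A₂x = (-S u*, 0, 0)`. Hence `γ₃` has a fixed point as soon as `u₃ ∈ range S = z^⊥`.
The six vectors `B₁eᵢ, B₂eᵢ` cannot be independent in a space of dimension `≤ 5`; since the
`Bᵢ` are `Ĩ`-isotropic, any relation `B₁p + B₂q = 0` forces `p, q ∈ ker S = ℝz`, which yields
`aB₁z + bB₂z = 0` with `(a, b) ≠ 0`. The relations `Aᵢvᵢ = 0` put `u₁*, u₂*` in `ker S` as well,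
and pairing the formulas for `u₃` with `z` gives `a ⟨u₃, z⟩ = b ⟨u₃, z⟩ = 0`.
-/

open Matrix

noncomputable section

namespace Matrix

section CommRing

variable {R m n : Type*} [CommRing R] [Fintype m] [Fintype n]

theorem transpose_mulVec_dotProduct (B : Matrix m n R) (x : m → R) (z : n → R) :
    (Bᵀ *ᵥ x) ⬝ᵥ z = x ⬝ᵥ (B *ᵥ z) := by
  rw [mulVec_transpose, dotProduct_mulVec]

theorem mulVec_eq_zero_of_mulVec_add_mulVec_eq_zero {G : Matrix m m R} {B₁ B₂ : Matrix m n R}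
    (hB₁ : B₁ᵀ * G * B₁ = 0) {p q : n → R} (h : B₁ *ᵥ p + B₂ *ᵥ q = 0) :
    (B₁ᵀ * G * B₂) *ᵥ q = 0 := by
  simpa [mulVec_add, mulVec_mulVec, hB₁] using congrArg ((B₁ᵀ * G) *ᵥ ·) h

end CommRing

section Field

variable {K m n : Type*} [Field K] [Fintype n]

theorem exists_ne_zero_mulVec_add_mulVec_eq_zero {B₁ B₂ : Matrix m n K}
    (h : Module.finrank K ↥(LinearMap.range B₁.mulVecLin ⊔ LinearMap.range B₂.mulVecLin) <
      2 * Fintype.card n) :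
    ∃ p q : n → K, (p, q) ≠ 0 ∧ B₁ *ᵥ p + B₂ *ᵥ q = 0 := by
  by_contra! hinj
  have hf : Function.Injective (B₁.mulVecLin.coprod B₂.mulVecLin) :=
    (injective_iff_map_eq_zero _).mpr fun x hx => by_contra fun hx0 => hinj x.1 x.2 hx0 hx
  have := LinearMap.finrank_range_of_inj hf
  rw [LinearMap.range_coprod, Module.finrank_prod, Module.finrank_fintype_fun_eq_card] at this
  omega

end Field

section OrderedField

variable {K : Type*} [Field K] [LinearOrder K] [IsStrictOrderedRing K]

theorem mulVec_dotProduct_self_eq_zero {n : Type*} [Fintype n] {C : Matrix n n K}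
    (hC : Cᵀ = -C) (v : n → K) : (C *ᵥ v) ⬝ᵥ v = 0 := by
  have h := transpose_mulVec_dotProduct C v v
  rw [hC, neg_mulVec, neg_dotProduct, dotProduct_comm v] at h
  linarith

theorem exists_eq_smul_of_cross_eq_zero {p z : Fin 3 → K} (hz : z ≠ 0) (h : p ⨯₃ z = 0) :
    ∃ c : K, p = c • z := by
  have hzz : z ⬝ᵥ z ≠ 0 := dotProduct_self_eq_zero.not.mpr hz
  have key := cross_cross_eq_smul_sub_smul' z p z
  rw [h, map_zero, eq_comm, sub_eq_zero] at key
  exact ⟨(p ⬝ᵥ z) / (z ⬝ᵥ z), by rw [div_eq_inv_mul, mul_smul, ← key, inv_smul_smul₀ hzz]⟩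

theorem exists_cross_eq_of_dotProduct_eq_zero {u z : Fin 3 → K} (hz : z ≠ 0)
    (h : u ⬝ᵥ z = 0) : ∃ t : Fin 3 → K, t ⨯₃ z = u := by
  have hzz : z ⬝ᵥ z ≠ 0 := dotProduct_self_eq_zero.not.mpr hz
  refine ⟨(z ⬝ᵥ z)⁻¹ • (z ⨯₃ u), ?_⟩
  rw [map_smul, LinearMap.smul_apply, ← cross_anticomm, cross_cross_eq_smul_sub_smul',
    dotProduct_comm z u, h, zero_smul, zero_sub, neg_neg, inv_smul_smul₀ hzz]

def skewAxis (S : Matrix (Fin 3) (Fin 3) K) : Fin 3 → K := ![S 1 2, -S 0 2, S 0 1]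

variable {S : Matrix (Fin 3) (Fin 3) K}

theorem mulVec_eq_cross_skewAxis (hS : Sᵀ = -S) (p : Fin 3 → K) :
    S *ᵥ p = p ⨯₃ skewAxis S := by
  have e : ∀ i j, S j i = -S i j := fun i j => by simpa using congrFun (congrFun hS i) j
  have hd : ∀ i, S i i = 0 := fun i => by linarith [e i i]
  ext i
  fin_cases i <;>
    simp [mulVec, dotProduct, Fin.sum_univ_three, cross_apply, skewAxis, hd, e 0 1, e 0 2,
      e 1 2] <;>
    ring

theorem skewAxis_ne_zero (hS : Sᵀ = -S) (h : S ≠ 0) : skewAxis S ≠ 0 := by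
  contrapose! h
  refine ext_iff_mulVec.mpr fun v => ?_
  rw [mulVec_eq_cross_skewAxis hS, h, map_zero, zero_mulVec]

theorem exists_eq_smul_skewAxis_of_mulVec_eq_zero (hS : Sᵀ = -S) (hS₀ : S ≠ 0) {p : Fin 3 → K}
    (hp : S *ᵥ p = 0) : ∃ c : K, p = c • skewAxis S :=
  exists_eq_smul_of_cross_eq_zero (skewAxis_ne_zero hS hS₀) (mulVec_eq_cross_skewAxis hS p ▸ hp)

theorem exists_mulVec_eq_of_dotProduct_skewAxis_eq_zero (hS : Sᵀ = -S) (hS₀ : S ≠ 0)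
    {u : Fin 3 → K} (hu : u ⬝ᵥ skewAxis S = 0) : ∃ t : Fin 3 → K, S *ᵥ t = u := by
  obtain ⟨t, ht⟩ := exists_cross_eq_of_dotProduct_eq_zero (skewAxis_ne_zero hS hS₀) hu
  exact ⟨t, by rw [mulVec_eq_cross_skewAxis hS, ht]⟩

variable {m : Type*} [Fintype m] {G : Matrix m m K}

theorem exists_smul_add_smul_eq_zero {B₁ B₂ : Matrix m (Fin 3) K} (hG : G.IsSymm)
    (hB₁ : B₁ᵀ * G * B₁ = 0) (hB₂ : B₂ᵀ * G * B₂ = 0)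
    (hS : (B₁ᵀ * G * B₂)ᵀ = -(B₁ᵀ * G * B₂)) (hS₀ : B₁ᵀ * G * B₂ ≠ 0)
    (hdim : Module.finrank K ↥(LinearMap.range B₁.mulVecLin ⊔ LinearMap.range B₂.mulVecLin) ≤ 5) :
    ∃ a b : K, (a, b) ≠ 0 ∧
      a • (B₁ *ᵥ skewAxis (B₁ᵀ * G * B₂)) + b • (B₂ *ᵥ skewAxis (B₁ᵀ * G * B₂)) = 0 := by
  obtain ⟨p, q, hpq, h⟩ := exists_ne_zero_mulVec_add_mulVec_eq_zero (B₁ := B₁) (B₂ := B₂)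
    (by simp only [Fintype.card_fin]; omega)
  have hSp : (B₁ᵀ * G * B₂) *ᵥ p = 0 := by
    have h' := mulVec_eq_zero_of_mulVec_add_mulVec_eq_zero hB₂ ((add_comm _ _).trans h)
    rwa [show B₂ᵀ * G * B₁ = (B₁ᵀ * G * B₂)ᵀ by
      rw [transpose_mul, transpose_mul, transpose_transpose, hG.eq, Matrix.mul_assoc],
      hS, neg_mulVec, neg_eq_zero] at h'
  obtain ⟨a, rfl⟩ := exists_eq_smul_skewAxis_of_mulVec_eq_zero hS hS₀ hSp
  obtain ⟨b, rfl⟩ := exists_eq_smul_skewAxis_of_mulVec_eq_zero hS hS₀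
    (mulVec_eq_zero_of_mulVec_add_mulVec_eq_zero hB₁ h)
  refine ⟨a, b, fun hab => hpq ?_, by simpa only [mulVec_smul] using h⟩
  obtain ⟨rfl, rfl⟩ := Prod.mk_eq_zero.mp hab
  simp

theorem mul_dotProduct_eq_zero_of_smul_add_smul_eq_zero {n : Type*} [Fintype n]
    {B B' : Matrix m n K} {C C' : Matrix n n K} (hC : Cᵀ = -C) (hC' : C'ᵀ = -C')
    {w : m → K} {z u : n → K}
    {a b c c' r : K} (hw : (B'ᵀ * G) *ᵥ w = C' *ᵥ (c' • z))
    (hab : a • (B *ᵥ z) + b • (B' *ᵥ z) = 0) (hu : r • (-((Bᵀ * G) *ᵥ w) + C *ᵥ (c • z)) = u) :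
    a * (u ⬝ᵥ z) = 0 := by
  have hCz : ∀ {C : Matrix n n K}, Cᵀ = -C → ∀ c : K, (C *ᵥ (c • z)) ⬝ᵥ z = 0 := fun hC c => by
    rw [mulVec_smul, smul_dotProduct, mulVec_dotProduct_self_eq_zero hC, smul_zero]
  have hBw : a * ((Bᵀ * G) *ᵥ w ⬝ᵥ z) = 0 := calc
    a * ((Bᵀ * G) *ᵥ w ⬝ᵥ z) = (G *ᵥ w) ⬝ᵥ (a • (B *ᵥ z)) := by
      rw [← mulVec_mulVec, transpose_mulVec_dotProduct, dotProduct_smul, smul_eq_mul]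
    _ = -b * ((B'ᵀ * G) *ᵥ w ⬝ᵥ z) := by
      rw [eq_neg_of_add_eq_zero_left hab, dotProduct_neg, dotProduct_smul, ← mulVec_mulVec,
        transpose_mulVec_dotProduct, smul_eq_mul, neg_mul]
    _ = 0 := by rw [hw, hCz hC' c', mul_zero]
  rw [← hu, smul_dotProduct, add_dotProduct, neg_dotProduct, hCz hC c, smul_eq_mul]
  linear_combination (-r) * hBw

end OrderedField

end Matrix

theorem exists_fixed_point_of_mulVec_eq {k m : ℕ} (ε : Fin m → ℝ)
    (B₁ B₂ : Matrix (Fin m) (Fin k) ℝ) (C₁ C₂ : Matrix (Fin k) (Fin k) ℝ) {t u : Fin k → ℝ}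
    (ht : (B₁ᵀ * diagonal ε * B₂) *ᵥ t = u) :
    ∃ x : BV k m, x + (2 : ℝ) • Amap ε B₁ C₁ (Amap ε B₂ C₂ x) + (u, 0, 0) = x := by
  refine ⟨(0, 0, (2 : ℝ)⁻¹ • t), ?_⟩
  rw [Amap_Amap, mulVec_smul, ht]
  ext <;> simp

theorem fixed_point_of_k_eq_three_general (k m : ℕ) (hk : k = 3)
    (ε : Fin m → ℝ)
    (B₁ B₂ : Matrix (Fin m) (Fin k) ℝ)
    (hB₁ : B₁ᵀ * Matrix.diagonal ε * B₁ = 0)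
    (hB₂ : B₂ᵀ * Matrix.diagonal ε * B₂ = 0)
    (C₁ C₂ : Matrix (Fin k) (Fin k) ℝ) (hC₁ : C₁ᵀ = -C₁) (hC₂ : C₂ᵀ = -C₂)
    (u₁ u₂ u₁s u₂s u₃ : Fin k → ℝ) (w₁ w₂ : Fin m → ℝ) (v₁ v₂ v₃ : BV k m)
    (hv₁ : v₁ = (u₁, w₁, u₁s)) (hv₂ : v₂ = (u₂, w₂, u₂s)) (hv₃ : v₃ = (u₃, 0, 0))
    (hA₁v₁ : Amap ε B₁ C₁ v₁ = 0) (hA₂v₂ : Amap ε B₂ C₂ v₂ = 0)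
    (hskew : (B₁ᵀ * Matrix.diagonal ε * B₂)ᵀ = -(B₁ᵀ * Matrix.diagonal ε * B₂))
    (h12 : (2 : ℝ) • Amap ε B₁ C₁ v₂ = v₃)
    (h21 : (-2 : ℝ) • Amap ε B₂ C₂ v₁ = v₃)
    (hA₁A₂ : B₁ᵀ * Matrix.diagonal ε * B₂ ≠ 0)
    (hdim : Module.finrank ℝ
      ↥(LinearMap.range B₁.mulVecLin ⊔ LinearMap.range B₂.mulVecLin) ≤ 5) :
    ∃ x : BV k m, x + (2 : ℝ) • Amap ε B₁ C₁ (Amap ε B₂ C₂ x) + v₃ = x := by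
  subst hk hv₁ hv₂ hv₃
  simp only [Amap, Prod.ext_iff, Prod.smul_mk, Prod.fst_zero, Prod.snd_zero] at hA₁v₁ hA₂v₂ h12 h21
  obtain ⟨hw₁, -⟩ := hA₁v₁
  obtain ⟨hw₂, hB₂u₂, -⟩ := hA₂v₂
  obtain ⟨hu₃₂, -⟩ := h12
  obtain ⟨hu₃₁, hB₂u₁, -⟩ := h21
  obtain ⟨c₁, rfl⟩ := exists_eq_smul_skewAxis_of_mulVec_eq_zero hskew hA₁A₂ (p := u₁s)
    (by rw [← mulVec_mulVec, (smul_eq_zero_iff_right (by norm_num)).mp hB₂u₁, mulVec_zero])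
  obtain ⟨c₂, rfl⟩ := exists_eq_smul_skewAxis_of_mulVec_eq_zero hskew hA₁A₂ (p := u₂s)
    (by rw [← mulVec_mulVec, hB₂u₂, mulVec_zero])
  obtain ⟨a, b, hab, hrel⟩ :=
    exists_smul_add_smul_eq_zero (isSymm_diagonal ε) hB₁ hB₂ hskew hA₁A₂ hdim
  have ha := mul_dotProduct_eq_zero_of_smul_add_smul_eq_zero hC₁ hC₂
    (neg_add_eq_zero.mp hw₂) hrel hu₃₂
  have hb := mul_dotProduct_eq_zero_of_smul_add_smul_eq_zero hC₂ hC₁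
    (neg_add_eq_zero.mp hw₁) ((add_comm _ _).trans hrel) hu₃₁
  have hu₃ : u₃ ⬝ᵥ skewAxis (B₁ᵀ * diagonal ε * B₂) = 0 := by
    by_contra h
    exact hab (Prod.mk_eq_zero.mpr
      ⟨(mul_eq_zero.mp ha).resolve_right h, (mul_eq_zero.mp hb).resolve_right h⟩)
  obtain ⟨t, ht⟩ := exists_mulVec_eq_of_dotProduct_skewAxis_eq_zero hskew hA₁A₂ hu₃
  exact exists_fixed_point_of_mulVec_eq ε B₁ B₂ C₁ C₂ ht

/-- if `k = 3`, `B₁ᵀĨB₂ ≠ 0` (i.e. `A₁A₂ ≠ 0`) and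
`dim(im B₁ + im B₂) ≤ 5`, then `γ₃` has a fixed point. -/
theorem fixed_point_of_k_eq_three (k m : ℕ) (hk : k = 3) (hm : 1 ≤ m)
    (ε : Fin m → ℝ) (hε : ∀ i, ε i = 1 ∨ ε i = -1)
    (B₁ B₂ : Matrix (Fin m) (Fin k) ℝ)
    (hB₁ : B₁ᵀ * Matrix.diagonal ε * B₁ = 0)
    (hB₂ : B₂ᵀ * Matrix.diagonal ε * B₂ = 0)
    (C₁ C₂ : Matrix (Fin k) (Fin k) ℝ) (hC₁ : C₁ᵀ = -C₁) (hC₂ : C₂ᵀ = -C₂)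
    (u₁ u₂ u₁s u₂s u₃ : Fin k → ℝ) (w₁ w₂ : Fin m → ℝ) (v₁ v₂ v₃ : BV k m)
    (hv₁ : v₁ = (u₁, w₁, u₁s)) (hv₂ : v₂ = (u₂, w₂, u₂s)) (hv₃ : v₃ = (u₃, 0, 0))
    (hA₁v₁ : Amap ε B₁ C₁ v₁ = 0) (hA₂v₂ : Amap ε B₂ C₂ v₂ = 0)
    (hskew : (B₁ᵀ * Matrix.diagonal ε * B₂)ᵀ = -(B₁ᵀ * Matrix.diagonal ε * B₂))
    (h12 : (2 : ℝ) • Amap ε B₁ C₁ v₂ = v₃)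
    (h21 : (-2 : ℝ) • Amap ε B₂ C₂ v₁ = v₃)
    (hA₁A₂ : B₁ᵀ * Matrix.diagonal ε * B₂ ≠ 0)
    (hdim : Module.finrank ℝ
      ↥(LinearMap.range B₁.mulVecLin ⊔ LinearMap.range B₂.mulVecLin) ≤ 5) :
    ∃ x : BV k m, x + (2 : ℝ) • Amap ε B₁ C₁ (Amap ε B₂ C₂ x) + v₃ = x :=
  fixed_point_of_k_eq_three_general k m hk ε B₁ B₂ hB₁ hB₂ C₁ C₂ hC₁ hC₂ u₁ u₂ u₁s u₂s u₃ w₁ w₂ v₁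
    v₂ v₃ hv₁ hv₂ hv₃ hA₁v₁ hA₂v₂ hskew h12 h21 hA₁A₂ hdim
end
end

section
/- In the block setting, if k = 4, B₁ᵀĨB₂ ≠ 0 (i.e. A₁A₂ ≠ 0), and rk(B₁ᵀĨB₂) = rk B₁ = rk B₂, then the affine map γ₃ has a fixed point in ℝⁿ. -/
/-!
On vectors `(0, 0, y)` the map `A₁A₂` acts as `y ↦ (-D y, 0, 0)` with `D = B₁ᵀĨB₂`, so `γ₃` has
a fixed point once `u₃` lies in the range of the skew-symmetric matrix `D`, i.e. once `u₃` is
orthogonal to `ker D`. The rank hypotheses force `ker D = ker B₁ = ker B₂`, and a nonzero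
skew-symmetric matrix has rank at least `2`, so for `k = 4` this kernel has dimension at most `2`.
It contains `u₁*` and `u₂*`, and on it `z ↦ ⟪z, u₃⟫` equals both `2⟪z, C₁u₂*⟫` and
`-2⟪z, C₂u₁*⟫`. Either `u₁* = 0`, or `u₂*` is a multiple of `u₁*` (and `⟪z, C₁u₁*⟫ = 0`), or
`u₁*, u₂*` span the kernel, on which `⟪·, C₁u₂*⟫` vanishes because `C₁` is skew.
-/

open Matrix

noncomputable section

open Module

namespace Matrix

variable {l m n : Type*} [Fintype n]

theorem exists_mulVec_eq_of_forall_dotProduct_eq_zero [Fintype m] [DecidableEq m]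
    [DecidableEq n] (M : Matrix m n ℝ) {x : m → ℝ} (hx : ∀ z, Mᵀ *ᵥ z = 0 → z ⬝ᵥ x = 0) :
    ∃ y, M *ᵥ y = x := by
  have hmem : WithLp.toLp 2 x ∈ (LinearMap.ker (toEuclideanLin Mᵀ))ᗮ := by
    refine (Submodule.mem_orthogonal _ _).2 fun z hz => ?_
    rw [EuclideanSpace.inner_eq_star_dotProduct, star_trivial, dotProduct_comm]
    exact hx _ (congrArg WithLp.ofLp hz)
  rw [LinearMap.orthogonal_ker, ← toEuclideanLin_conjTranspose_eq_adjoint,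
    conjTranspose_eq_transpose_of_trivial, transpose_transpose] at hmem
  obtain ⟨y, hy⟩ := hmem
  exact ⟨y.ofLp, congrArg WithLp.ofLp hy⟩

theorem dotProduct_mulVec_of_transpose_eq_neg {R : Type*} [CommRing R] {C : Matrix n n R}
    (hC : Cᵀ = -C) (u v : n → R) : u ⬝ᵥ (C *ᵥ v) = -(v ⬝ᵥ (C *ᵥ u)) := by
  rw [dotProduct_mulVec, ← mulVec_transpose, hC, neg_mulVec, neg_dotProduct, dotProduct_comm]

theorem dotProduct_mulVec_self_of_transpose_eq_neg {R : Type*} [CommRing R] [NoZeroDivisors R]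
    [CharZero R] {C : Matrix n n R} (hC : Cᵀ = -C) (v : n → R) : v ⬝ᵥ (C *ᵥ v) = 0 :=
  self_eq_neg.mp (dotProduct_mulVec_of_transpose_eq_neg hC v v)

theorem dotProduct_transpose_mul_mulVec_eq_zero {R : Type*} [CommRing R] [Fintype m]
    {B : Matrix m n R} {z : n → R} (hz : B *ᵥ z = 0) (M : Matrix m l R) [Fintype l]
    (w : l → R) : z ⬝ᵥ ((Bᵀ * M) *ᵥ w) = 0 := by
  rw [dotProduct_mulVec, ← vecMul_vecMul, vecMul_transpose, hz, zero_vecMul, zero_dotProduct]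

variable {K : Type*} [Field K]

theorem rank_add_finrank_ker_mulVecLin (M : Matrix m n K) :
    M.rank + finrank K (LinearMap.ker M.mulVecLin) = Fintype.card n := by
  simpa [rank] using LinearMap.finrank_range_add_finrank_ker M.mulVecLin

theorem ker_mulVecLin_eq_of_le_of_rank_le {M : Matrix m n K} {N : Matrix l n K}
    (h : LinearMap.ker M.mulVecLin ≤ LinearMap.ker N.mulVecLin) (hr : M.rank ≤ N.rank) :
    LinearMap.ker M.mulVecLin = LinearMap.ker N.mulVecLin := by
  refine Submodule.eq_of_le_of_finrank_le h ?_
  have := rank_add_finrank_ker_mulVecLin M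
  have := rank_add_finrank_ker_mulVecLin N
  omega

theorem two_le_rank_of_transpose_eq_neg [CharZero K] {D : Matrix n n K} (hD : Dᵀ = -D)
    (h0 : D ≠ 0) : 2 ≤ D.rank := by
  obtain ⟨i, j, hij⟩ : ∃ i j, D i j ≠ 0 := by
    by_contra! h
    exact h0 (ext h)
  have hD' : ∀ a b, D b a = -D a b := fun a b => congrFun (congrFun hD a) b
  have hdiag : ∀ a, D a a = 0 := fun a => self_eq_neg.mp (hD' a a)
  have hind : LinearIndependent K ![D.col i, D.col j] := by
    refine LinearIndependent.pair_iff.2 fun s t hst => ?_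
    have hi := congrFun hst i
    have hj := congrFun hst j
    simp [hdiag, hD' i j] at hi hj
    exact ⟨hj.resolve_right hij, hi.resolve_right hij⟩
  rw [rank_eq_finrank_span_cols]
  calc 2 = finrank K (Submodule.span K (Set.range ![D.col i, D.col j])) := by
        rw [finrank_span_eq_card hind, Fintype.card_fin]
    _ ≤ _ := Submodule.finrank_mono <| Submodule.span_mono <| by
        rintro _ ⟨a, rfl⟩
        fin_cases a <;> simp

end Matrix

theorem Submodule.span_pair_eq_of_finrank_le_two {K V : Type*} [DivisionRing K] [AddCommGroup V]
    [Module K V] {S : Submodule K V} [FiniteDimensional K S] (hS : finrank K S ≤ 2) {a b : V}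
    (ha : a ∈ S) (hb : b ∈ S) (hab : LinearIndependent K ![a, b]) :
    span K {a, b} = S := by
  refine eq_of_le_of_finrank_le (span_le.2 (Set.insert_subset ha (by simpa using hb))) ?_
  rw [← Matrix.range_cons_cons_empty, finrank_span_eq_card hab, Fintype.card_fin]
  exact hS

section BlockSetting

variable {k m : ℕ} (ε : Fin m → ℝ)

theorem dotProduct_Amap_fst {B : Matrix (Fin m) (Fin k) ℝ} {z : Fin k → ℝ} (hz : B *ᵥ z = 0)
    (C : Matrix (Fin k) (Fin k) ℝ) (x : BV k m) :
    z ⬝ᵥ (Amap ε B C x).1 = z ⬝ᵥ (C *ᵥ x.2.2) := by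
  rw [Amap, dotProduct_add, dotProduct_neg, dotProduct_transpose_mul_mulVec_eq_zero hz,
    neg_zero, zero_add]

theorem Amap_Amap_zero_zero (B₁ B₂ : Matrix (Fin m) (Fin k) ℝ) (C₁ C₂ : Matrix (Fin k) (Fin k) ℝ)
    (y : Fin k → ℝ) :
    Amap ε B₁ C₁ (Amap ε B₂ C₂ (0, 0, y)) = (-((B₁ᵀ * diagonal ε * B₂) *ᵥ y), 0, 0) := by
  simp [Amap, mulVec_mulVec]

theorem dotProduct_translation_eq_zero {B₁ B₂ : Matrix (Fin m) (Fin k) ℝ}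
    {C₁ C₂ : Matrix (Fin k) (Fin k) ℝ} (hC₁ : C₁ᵀ = -C₁)
    (hK : finrank ℝ (LinearMap.ker B₁.mulVecLin) ≤ 2) {v₁ v₂ : BV k m} {u₃ : Fin k → ℝ}
    (hA₁v₁ : Amap ε B₁ C₁ v₁ = 0) (h12 : (2 : ℝ) • Amap ε B₁ C₁ v₂ = (u₃, 0, 0))
    (h21 : (-2 : ℝ) • Amap ε B₂ C₂ v₁ = (u₃, 0, 0)) {z : Fin k → ℝ} (hz₁ : B₁ *ᵥ z = 0)
    (hz₂ : B₂ *ᵥ z = 0) : z ⬝ᵥ u₃ = 0 := by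
  obtain ⟨u₁, w₁, u₁s⟩ := v₁
  obtain ⟨u₂, w₂, u₂s⟩ := v₂
  have hB₁u₁s : B₁ *ᵥ u₁s = 0 := congrArg (·.2.1) hA₁v₁
  have hB₁u₂s : B₁ *ᵥ u₂s = 0 := by simpa [Amap] using congrArg (·.2.1) h12
  have hC₁u₁s {y} (hy : B₁ *ᵥ y = 0) : y ⬝ᵥ (C₁ *ᵥ u₁s) = 0 := by
    simpa [hA₁v₁] using (dotProduct_Amap_fst ε hy C₁ (u₁, w₁, u₁s)).symm
  have hu₃ {y} (hy : B₁ *ᵥ y = 0) : y ⬝ᵥ u₃ = 2 * (y ⬝ᵥ (C₁ *ᵥ u₂s)) := by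
    have h12₁ : (2 : ℝ) • (Amap ε B₁ C₁ (u₂, w₂, u₂s)).1 = u₃ := congrArg Prod.fst h12
    rw [← h12₁, dotProduct_smul, dotProduct_Amap_fst ε hy, smul_eq_mul]
  rcases eq_or_ne u₁s 0 with rfl | hu₁s
  · have h21₁ : (-2 : ℝ) • (Amap ε B₂ C₂ (u₁, w₁, 0)).1 = u₃ := congrArg Prod.fst h21
    rw [← h21₁, dotProduct_smul, dotProduct_Amap_fst ε hz₂, mulVec_zero, dotProduct_zero,
      smul_zero]
  by_cases hli : LinearIndependent ℝ ![u₁s, u₂s]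
  · have hz : z ∈ Submodule.span ℝ {u₁s, u₂s} := by
      rw [Submodule.span_pair_eq_of_finrank_le_two hK hB₁u₁s hB₁u₂s hli]
      exact hz₁
    obtain ⟨s, t, rfl⟩ := Submodule.mem_span_pair.1 hz
    rw [hu₃ hz₁, add_dotProduct, smul_dotProduct, smul_dotProduct,
      dotProduct_mulVec_of_transpose_eq_neg hC₁ u₁s, hC₁u₁s hB₁u₂s,
      dotProduct_mulVec_self_of_transpose_eq_neg hC₁ u₂s]
    simp
  · obtain ⟨c, rfl⟩ : ∃ c : ℝ, c • u₁s = u₂s := by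
      simpa [LinearIndependent.pair_iff' hu₁s] using hli
    rw [hu₃ hz₁, mulVec_smul, dotProduct_smul, hC₁u₁s hz₁, smul_zero, mul_zero]

end BlockSetting

theorem fixed_point_of_k_eq_four_general (k m : ℕ) (hk : k = 4)
    (ε : Fin m → ℝ)
    (B₁ B₂ : Matrix (Fin m) (Fin k) ℝ)
    (C₁ C₂ : Matrix (Fin k) (Fin k) ℝ) (hC₁ : C₁ᵀ = -C₁)
    (u₃ : Fin k → ℝ) (v₁ v₂ v₃ : BV k m)
    (hv₃ : v₃ = (u₃, 0, 0))
    (hA₁v₁ : Amap ε B₁ C₁ v₁ = 0)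
    (hskew : (B₁ᵀ * Matrix.diagonal ε * B₂)ᵀ = -(B₁ᵀ * Matrix.diagonal ε * B₂))
    (h12 : (2 : ℝ) • Amap ε B₁ C₁ v₂ = v₃)
    (h21 : (-2 : ℝ) • Amap ε B₂ C₂ v₁ = v₃)
    (hA₁A₂ : B₁ᵀ * Matrix.diagonal ε * B₂ ≠ 0)
    (hrk₁ : (B₁ᵀ * Matrix.diagonal ε * B₂).rank = B₁.rank)
    (hrk₂ : B₁.rank = B₂.rank) :
    ∃ x : BV k m, x + (2 : ℝ) • Amap ε B₁ C₁ (Amap ε B₂ C₂ x) + v₃ = x := by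
  subst hk hv₃
  set D := B₁ᵀ * diagonal ε * B₂ with hD
  have hkerT : LinearMap.ker Dᵀ.mulVecLin = LinearMap.ker D.mulVecLin := by
    ext z
    simp [hskew]
  have hker₁ : LinearMap.ker B₁.mulVecLin = LinearMap.ker D.mulVecLin := by
    refine ker_mulVecLin_eq_of_le_of_rank_le ?_ hrk₁.ge
    rw [← hkerT, hD, transpose_mul, transpose_mul, transpose_transpose, ← Matrix.mul_assoc,
      mulVecLin_mul]
    exact LinearMap.ker_le_ker_comp _ _
  have hker₂ : LinearMap.ker B₂.mulVecLin = LinearMap.ker D.mulVecLin := by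
    refine ker_mulVecLin_eq_of_le_of_rank_le ?_ (hrk₁.trans hrk₂).ge
    rw [hD, mulVecLin_mul]
    exact LinearMap.ker_le_ker_comp _ _
  have hK : finrank ℝ (LinearMap.ker B₁.mulVecLin) ≤ 2 := by
    have hrank := rank_add_finrank_ker_mulVecLin D
    rw [Fintype.card_fin] at hrank
    have := two_le_rank_of_transpose_eq_neg hskew hA₁A₂
    rw [hker₁]
    omega
  obtain ⟨y, hy⟩ := exists_mulVec_eq_of_forall_dotProduct_eq_zero D (x := u₃) fun z hz => by
    have hz' : z ∈ LinearMap.ker D.mulVecLin := hkerT ▸ hz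
    exact dotProduct_translation_eq_zero ε hC₁ hK hA₁v₁ h12 h21 (hker₁.ge hz') (hker₂.ge hz')
  refine ⟨(0, 0, (2⁻¹ : ℝ) • y), ?_⟩
  rw [Amap_Amap_zero_zero, ← hD, mulVec_smul, hy]
  ext <;> simp

/-- if `k = 4`, `B₁ᵀĨB₂ ≠ 0` (i.e. `A₁A₂ ≠ 0`) and
`rk(B₁ᵀĨB₂) = rk B₁ = rk B₂`, then `γ₃` has a fixed point. -/
theorem fixed_point_of_k_eq_four (k m : ℕ) (hk : k = 4) (hm : 1 ≤ m)
    (ε : Fin m → ℝ) (hε : ∀ i, ε i = 1 ∨ ε i = -1)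
    (B₁ B₂ : Matrix (Fin m) (Fin k) ℝ)
    (hB₁ : B₁ᵀ * Matrix.diagonal ε * B₁ = 0)
    (hB₂ : B₂ᵀ * Matrix.diagonal ε * B₂ = 0)
    (C₁ C₂ : Matrix (Fin k) (Fin k) ℝ) (hC₁ : C₁ᵀ = -C₁) (hC₂ : C₂ᵀ = -C₂)
    (u₁ u₂ u₁s u₂s u₃ : Fin k → ℝ) (w₁ w₂ : Fin m → ℝ) (v₁ v₂ v₃ : BV k m)
    (hv₁ : v₁ = (u₁, w₁, u₁s)) (hv₂ : v₂ = (u₂, w₂, u₂s)) (hv₃ : v₃ = (u₃, 0, 0))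
    (hA₁v₁ : Amap ε B₁ C₁ v₁ = 0) (hA₂v₂ : Amap ε B₂ C₂ v₂ = 0)
    (hskew : (B₁ᵀ * Matrix.diagonal ε * B₂)ᵀ = -(B₁ᵀ * Matrix.diagonal ε * B₂))
    (h12 : (2 : ℝ) • Amap ε B₁ C₁ v₂ = v₃)
    (h21 : (-2 : ℝ) • Amap ε B₂ C₂ v₁ = v₃)
    (hA₁A₂ : B₁ᵀ * Matrix.diagonal ε * B₂ ≠ 0)
    (hrk₁ : (B₁ᵀ * Matrix.diagonal ε * B₂).rank = B₁.rank)
    (hrk₂ : B₁.rank = B₂.rank) :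
    ∃ x : BV k m, x + (2 : ℝ) • Amap ε B₁ C₁ (Amap ε B₂ C₂ x) + v₃ = x :=
  fixed_point_of_k_eq_four_general k m hk ε B₁ B₂ C₁ C₂ hC₁ u₃ v₁ v₂ v₃ hv₃ hA₁v₁ hskew h12 h21
    hA₁A₂ hrk₁ hrk₂

end
end

section
/- Let m ≥ 1, n = m + 4, write vectors of ℝⁿ as triples (u, w, u*) with u, u* ∈ ℝ², w ∈ ℝᵐ, and equip ℝⁿ with the bilinear form ⟨(u,w,u*),(u',w',u'')⟩ = uᵀu'' + (u*)ᵀu' + wᵀw' of signature (n−2, 2). Let J = [[0,1],[−1,0]], and for i = 1, …, k let cᵢ ∈ ℝ, uᵢ ∈ ℝ², wᵢ ∈ ℝᵐ, let Aᵢ : ℝⁿ → ℝⁿ be the linear map (u,w,u*) ↦ (cᵢ J u*, 0, 0), vᵢ = (uᵢ, wᵢ, 0), and γᵢ : x ↦ x + Aᵢx + vᵢ. Assume v₁, …, v_k are linearly independent and that for all λ₁, …, λ_k ∈ ℝ, Σᵢ λᵢwᵢ = 0 implies Σᵢ λᵢcᵢ = 0. Then the group Γ generated by γ₁, …, γ_k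 is a subgroup of the isometry group of the form, its centralizer in this isometry group acts transitively on ℝⁿ, and Γ acts freely and properly discontinuously on ℝⁿ (for every compact set K ⊆ ℝⁿ only finitely many γ ∈ Γ satisfy γK ∩ K ≠ ∅). -/
open Matrix

noncomputable section

/-- Vectors of `ℝⁿ` (`n = m + 4`) written as triples `(u, w, u*)`,
`u, u* ∈ ℝ²`, `w ∈ ℝᵐ`. -/
abbrev V14 (m : ℕ) := (Fin 2 → ℝ) × (Fin m → ℝ) × (Fin 2 → ℝ)

/-- The bilinear form `⟨(u,w,u*),(u',w',u'')⟩ = uᵀu'' + (u*)ᵀu' + wᵀw'`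
of signature `(n-2, 2)`. -/
def form14 {m : ℕ} (x y : V14 m) : ℝ :=
  x.1 ⬝ᵥ y.2.2 + x.2.2 ⬝ᵥ y.1 + x.2.1 ⬝ᵥ y.2.1

/-- `J = [[0,1],[-1,0]]`. -/
def J : Matrix (Fin 2) (Fin 2) ℝ := !![0, 1; -1, 0]

/-- The linear map `A : (u, w, u*) ↦ (c J u*, 0, 0)`. -/
def A14 {m : ℕ} (c : ℝ) : V14 m →ₗ[ℝ] V14 m where
  toFun x := (c • (J *ᵥ x.2.2), 0, 0)
  map_add' a b := by
    simp [Matrix.mulVec_add, smul_add, Prod.ext_iff]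
    constructor <;> ring
  map_smul' r a := by
    simp [Matrix.mulVec_smul, Prod.ext_iff, smul_comm r c]
    constructor <;> ring

lemma A14_sq {m : ℕ} (c : ℝ) (x : V14 m) : A14 (m := m) c (A14 c x) = 0 := by
  simp [A14, Matrix.mulVec_zero, Prod.ext_iff]

/-- The linear equivalence `I + A`. -/
def L14 {m : ℕ} (c : ℝ) : V14 m ≃ₗ[ℝ] V14 m :=
  LinearEquiv.ofLinear (LinearMap.id + A14 c) (LinearMap.id - A14 c)
    (by
      apply LinearMap.ext; intro x
      simp only [LinearMap.comp_apply, LinearMap.add_apply, LinearMap.sub_apply,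
        LinearMap.id_apply, map_sub, A14_sq]
      abel)
    (by
      apply LinearMap.ext; intro x
      simp only [LinearMap.comp_apply, LinearMap.add_apply, LinearMap.sub_apply,
        LinearMap.id_apply, map_add, A14_sq]
      abel)

/-- The affine transformation `γ : x ↦ x + Ax + v` (an affine equivalence since
`(I + A)⁻¹ = I - A`). -/
def gamma14 {m : ℕ} (c : ℝ) (v : V14 m) : V14 m ≃ᵃ[ℝ] V14 m :=
  (L14 c).toAffineEquiv.trans (AffineEquiv.constVAdd ℝ (V14 m) v)

/-- The isometry group of the form `form14`. -/
def Iso14 (m : ℕ) : Subgroup (V14 m ≃ᵃ[ℝ] V14 m) where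
  carrier := { γ | ∀ x y, form14 (γ.linear x) (γ.linear y) = form14 x y }
  one_mem' := by intro x y; rfl
  mul_mem' := by
    intro a b ha hb x y
    have h : (a * b).linear x = a.linear (b.linear x) := rfl
    have h' : (a * b).linear y = a.linear (b.linear y) := rfl
    rw [h, h', ha, hb]
  inv_mem' := by
    intro a ha x y
    have h : a.linear ((a⁻¹).linear x) = x := a.linear.apply_symm_apply x
    have h' : a.linear ((a⁻¹).linear y) = y := a.linear.apply_symm_apply y
    calc form14 ((a⁻¹).linear x) ((a⁻¹).linear y)
        = form14 (a.linear ((a⁻¹).linear x)) (a.linear ((a⁻¹).linear y)) := (ha _ _).symm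
      _ = form14 x y := by rw [h, h']

/-!
Choose `a ∈ ℝᵐ` with `wᵢ ⬝ a = cᵢ`; the hypothesis on the `λ`s is exactly what makes this linear
system solvable. Then `q = (u, w) ↦ γ_q : x ↦ x + ((w ⬝ a) J x*, 0, 0) + (u, w, 0)` is a
homomorphism from `ℝ² × ℝᵐ` to the isometry group, and `Γ` is the image of the lattice spanned by
the `(uᵢ, wᵢ)`. If `γ_q` fixes a point then `w = 0`, hence `u = 0`. A point `x` and its image
`γ_q x` determine `q` continuously, so the `γ ∈ Γ` with `γK ∩ K ≠ ∅` come from lattice points in a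
compact set, and there are finitely many. Finally, the isometries `x ↦ x + N x + t` with a suitable
nilpotent `N` commute with every `γ_q`, and they act transitively.
-/

open Topology

theorem exists_dotProduct_eq_of_sum_smul_eq_zero {ι κ 𝕜 : Type*} [Fintype ι] [Fintype κ]
    [Field 𝕜] (w : ι → κ → 𝕜) (c : ι → 𝕜)
    (h : ∀ lam : ι → 𝕜, ∑ i, lam i • w i = 0 → ∑ i, lam i * c i = 0) :
    ∃ a : κ → 𝕜, ∀ i, w i ⬝ᵥ a = c i := by
  classical
  let L (j : κ) : (ι → 𝕜) →ₗ[𝕜] 𝕜 := LinearMap.proj j ∘ₗ Fintype.linearCombination 𝕜 w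
  have hker : ⨅ j, LinearMap.ker (L j) ≤ LinearMap.ker (Fintype.linearCombination 𝕜 c) := by
    intro lam hlam
    simp only [Submodule.mem_iInf, LinearMap.mem_ker] at hlam ⊢
    simpa [L, Fintype.linearCombination_apply] using h lam (funext hlam)
  obtain ⟨a, ha⟩ :=
    (Submodule.mem_span_range_iff_exists_fun 𝕜).1 (mem_span_of_iInf_ker_le_ker hker)
  refine ⟨a, fun i => ?_⟩
  simpa [L, Fintype.linearCombination_apply_single, dotProduct, mul_comm] using
    LinearMap.congr_fun ha (Pi.single i 1)

theorem LinearIndependent.finite_setOf_sum_zsmul_mem {ι E : Type*} [Fintype ι]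
    [AddCommGroup E] [Module ℝ E] [TopologicalSpace E] [IsTopologicalAddGroup E]
    [ContinuousSMul ℝ E] [T2Space E] {v : ι → E} (hv : LinearIndependent ℝ v)
    {K : Set E} (hK : IsCompact K) : {n : ι → ℤ | ∑ i, n i • v i ∈ K}.Finite := by
  have hcomb : IsClosedEmbedding (Fintype.linearCombination ℝ v) :=
    LinearMap.isClosedEmbedding_of_injective <| LinearMap.ker_eq_bot.2 <|
      linearIndependent_iff_injective_fintypeLinearCombination.1 hv
  have hcast : IsClosedEmbedding fun (n : ι → ℤ) i => (n i : ℝ) :=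
    .piMap fun _ => Int.isClosedEmbedding_coe_real
  refine ((hcomb.comp hcast).isCompact_preimage hK).finite_of_discrete.subset fun n hn => ?_
  simpa [Fintype.linearCombination_apply, Int.cast_smul_eq_zsmul] using hn

theorem MonoidHom.exists_eq_sum_zsmul_of_mem_closure_range {ι A G : Type*} [Fintype ι]
    [AddCommGroup A] [Group G] (f : Multiplicative A →* G) (p : ι → A) {g : G}
    (hg : g ∈ Subgroup.closure (Set.range fun i => f (.ofAdd (p i)))) :
    ∃ n : ι → ℤ, g = f (.ofAdd (∑ i, n i • p i)) := by
  classical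
  let comb : Multiplicative (ι → ℤ) →* G :=
    f.comp (Fintype.linearCombination ℤ p).toAddMonoidHom.toMultiplicative
  have hle : Subgroup.closure (Set.range fun i => f (.ofAdd (p i))) ≤ comb.range :=
    Subgroup.closure_le _ |>.2 <| Set.range_subset_iff.2 fun i =>
      ⟨.ofAdd (Pi.single i 1), by simp [comb, Fintype.linearCombination_apply_single]⟩
  obtain ⟨n, rfl⟩ := hle hg
  exact ⟨n.toAdd, by simp [comb, Fintype.linearCombination_apply]⟩

section

variable {m : ℕ}

lemma J_mulVec_dotProduct (a b : Fin 2 → ℝ) : J *ᵥ a ⬝ᵥ b = -(a ⬝ᵥ J *ᵥ b) := by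
  simp [_root_.J, mulVec, dotProduct, Fin.sum_univ_two]

lemma gamma14_apply (c : ℝ) (v x : V14 m) :
    gamma14 c v x = (x.1 + c • J *ᵥ x.2.2 + v.1, x.2.1 + v.2.1, x.2.2 + v.2.2) := by
  simp [gamma14, L14, A14, Prod.ext_iff, add_comm]

lemma gamma14_linear_apply (c : ℝ) (v x : V14 m) :
    (gamma14 c v).linear x = x + A14 c x := rfl

lemma gamma14_mem_Iso14 (c : ℝ) (v : V14 m) : gamma14 c v ∈ Iso14 m := by
  intro x y
  simp only [gamma14_linear_apply, A14, LinearMap.coe_mk, AddHom.coe_mk, form14, Prod.fst_add,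
    Prod.snd_add, add_zero, add_dotProduct, dotProduct_add, smul_dotProduct, dotProduct_smul,
    smul_eq_mul, J_mulVec_dotProduct]
  ring

lemma gamma14_mul (c c' : ℝ) (v v' : V14 m) (hv' : v'.2.2 = 0) :
    gamma14 c v * gamma14 c' v' = gamma14 (c + c') (v + v') := by
  ext x : 1
  simp only [AffineEquiv.coe_mul, Function.comp_apply, gamma14_apply, hv', add_zero,
    Prod.fst_add, Prod.snd_add, Prod.ext_iff, add_smul]
  exact ⟨by abel, by abel, trivial⟩

lemma gamma14_zero : gamma14 (m := m) 0 0 = 1 := by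
  ext x : 1
  simp [gamma14_apply]

def gammaHom (a : Fin m → ℝ) :
    Multiplicative ((Fin 2 → ℝ) × (Fin m → ℝ)) →* (V14 m ≃ᵃ[ℝ] V14 m) where
  toFun q := gamma14 (q.toAdd.2 ⬝ᵥ a) (q.toAdd.1, q.toAdd.2, 0)
  map_one' := by
    simp only [toAdd_one, Prod.fst_zero, Prod.snd_zero, zero_dotProduct]
    exact gamma14_zero
  map_mul' q q' := by
    rw [gamma14_mul _ _ _ _ rfl]
    simp [add_dotProduct]

lemma gammaHom_apply (a : Fin m → ℝ) (q : Multiplicative ((Fin 2 → ℝ) × (Fin m → ℝ)))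
    (x : V14 m) : gammaHom a q x =
      (x.1 + (q.toAdd.2 ⬝ᵥ a) • J *ᵥ x.2.2 + q.toAdd.1, x.2.1 + q.toAdd.2, x.2.2) := by
  simp [gammaHom, gamma14_apply]

lemma range_gammaHom_le_Iso14 (a : Fin m → ℝ) : (gammaHom a).range ≤ Iso14 m := by
  rintro _ ⟨q, rfl⟩
  exact gamma14_mem_Iso14 _ _

lemma eq_one_of_gammaHom_apply_eq_self {a : Fin m → ℝ}
    {q : Multiplicative ((Fin 2 → ℝ) × (Fin m → ℝ))} {x : V14 m} (h : gammaHom a q x = x) :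
    q = 1 := by
  simp only [gammaHom_apply, Prod.ext_iff, add_eq_left] at h
  obtain ⟨h₁, h₂⟩ := h
  simp only [h₂.1, zero_dotProduct, zero_smul, add_zero, add_eq_left] at h₁
  exact Prod.ext h₁ h₂.1

/-- The parameter `q` of the element `gammaHom a q` sending `x` to `y`, if there is one. -/
def displacement (a : Fin m → ℝ) (x y : V14 m) : (Fin 2 → ℝ) × (Fin m → ℝ) :=
  (y.1 - x.1 - ((y.2.1 - x.2.1) ⬝ᵥ a) • J *ᵥ x.2.2, y.2.1 - x.2.1)

lemma displacement_gammaHom_apply (a : Fin m → ℝ)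
    (q : Multiplicative ((Fin 2 → ℝ) × (Fin m → ℝ))) (x : V14 m) :
    displacement a x (gammaHom a q x) = q.toAdd := by
  simp only [displacement, gammaHom_apply, add_sub_cancel_left, add_assoc]

lemma continuous_displacement (a : Fin m → ℝ) :
    Continuous fun xy : V14 m × V14 m => displacement a xy.1 xy.2 := by
  unfold displacement
  fun_prop

/-- `Z14 a t` has linear part `1 + N14 a (J t*)`: commuting with every `gammaHom a q` forces
`N (u, w, 0) = (w ⬝ a) • J t*`, and being an isometry then determines the rest of `N`. -/
def N14 (a : Fin m → ℝ) (s : Fin 2 → ℝ) : Module.End ℝ (V14 m) where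
  toFun x := ((x.2.1 ⬝ᵥ a - (a ⬝ᵥ a) / 2 * (s ⬝ᵥ x.2.2)) • s, -(s ⬝ᵥ x.2.2) • a, 0)
  map_add' x y := by
    simp only [Prod.snd_add, Prod.fst_add, add_dotProduct, dotProduct_add, Prod.mk_add_mk,
      add_zero, Prod.mk.injEq]
    exact ⟨by module, by module, trivial⟩
  map_smul' r x := by
    simp only [Prod.smul_snd, Prod.smul_fst, smul_dotProduct, dotProduct_smul, smul_eq_mul,
      RingHom.id_apply, Prod.smul_mk, smul_zero, Prod.mk.injEq]
    exact ⟨by module, by module, trivial⟩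

lemma N14_apply (a : Fin m → ℝ) (s : Fin 2 → ℝ) (x : V14 m) :
    N14 a s x = ((x.2.1 ⬝ᵥ a - (a ⬝ᵥ a) / 2 * (s ⬝ᵥ x.2.2)) • s, -(s ⬝ᵥ x.2.2) • a, 0) := rfl

lemma N14_pow_three (a : Fin m → ℝ) (s : Fin 2 → ℝ) : N14 a s ^ 3 = 0 := by
  refine LinearMap.ext fun x => ?_
  simp [pow_succ, N14_apply]

def Z14 (a : Fin m → ℝ) (t : V14 m) : V14 m ≃ᵃ[ℝ] V14 m :=
  (LinearMap.GeneralLinearGroup.toLinearEquiv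
      (IsNilpotent.isUnit_one_add ⟨3, N14_pow_three a (J *ᵥ t.2.2)⟩).unit).toAffineEquiv.trans
    (AffineEquiv.constVAdd ℝ (V14 m) t)

lemma Z14_apply (a : Fin m → ℝ) (t x : V14 m) :
    Z14 a t x = t + (x + N14 a (J *ᵥ t.2.2) x) := rfl

lemma Z14_linear_apply (a : Fin m → ℝ) (t x : V14 m) :
    (Z14 a t).linear x = x + N14 a (J *ᵥ t.2.2) x := rfl

lemma Z14_mem_Iso14 (a : Fin m → ℝ) (t : V14 m) : Z14 a t ∈ Iso14 m := by
  intro x y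
  simp only [Z14_linear_apply, N14_apply, form14, Prod.fst_add, Prod.snd_add, add_zero,
    add_dotProduct, dotProduct_add, smul_dotProduct, dotProduct_smul, smul_eq_mul,
    dotProduct_comm _ a, dotProduct_comm _ (J *ᵥ t.2.2)]
  ring

lemma Z14_mem_centralizer (a : Fin m → ℝ) (t : V14 m) :
    Z14 a t ∈ Subgroup.centralizer ((gammaHom a).range : Set (V14 m ≃ᵃ[ℝ] V14 m)) := by
  rintro _ ⟨q, rfl⟩
  ext x : 1
  simp only [AffineEquiv.coe_mul, Function.comp_apply, gammaHom_apply, Z14_apply, N14_apply,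
    Prod.fst_add, Prod.snd_add, add_zero, Prod.ext_iff, add_dotProduct, mulVec_add, smul_add]
  exact ⟨by module, by module, trivial⟩

lemma exists_Z14_apply_eq (a : Fin m → ℝ) (p q : V14 m) : ∃ t, Z14 a t p = q := by
  refine ⟨q - p - N14 a (J *ᵥ (q.2.2 - p.2.2)) p, ?_⟩
  have ht : (q - p - N14 a (J *ᵥ (q.2.2 - p.2.2)) p).2.2 = q.2.2 - p.2.2 := by
    simp [N14_apply]
  rw [Z14_apply, ht]
  abel

end

theorem homogeneous_from_data_general (m : ℕ) (k : ℕ)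
    (c : Fin k → ℝ) (u : Fin k → Fin 2 → ℝ) (w : Fin k → Fin m → ℝ)
    (v : Fin k → V14 m) (hv : ∀ i, v i = (u i, w i, 0))
    (hind : LinearIndependent ℝ v)
    (hlam : ∀ lam : Fin k → ℝ, ∑ i, lam i • w i = 0 → ∑ i, lam i * c i = 0) :
    Subgroup.closure (Set.range fun i => gamma14 (c i) (v i)) ≤ Iso14 m ∧
    (∀ p q : V14 m, ∃ z ∈ Iso14 m ⊓ Subgroup.centralizer
        ((Subgroup.closure (Set.range fun i => gamma14 (c i) (v i)) : Subgroup _) :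
          Set (V14 m ≃ᵃ[ℝ] V14 m)), z p = q) ∧
    (∀ g ∈ Subgroup.closure (Set.range fun i => gamma14 (c i) (v i)),
      (∃ x : V14 m, g x = x) → g = 1) ∧
    (∀ K : Set (V14 m), IsCompact K →
      {g : V14 m ≃ᵃ[ℝ] V14 m |
        g ∈ Subgroup.closure (Set.range fun i => gamma14 (c i) (v i)) ∧
        ((g '' K) ∩ K).Nonempty}.Finite) := by
  obtain ⟨a, ha⟩ := exists_dotProduct_eq_of_sum_smul_eq_zero w c hlam
  have hγ : (fun i => gamma14 (c i) (v i)) = fun i => gammaHom a (.ofAdd (u i, w i)) := by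
    ext i : 1
    simp [gammaHom, hv, ha]
  have hΓ : Subgroup.closure (Set.range fun i => gammaHom a (.ofAdd (u i, w i))) ≤
      (gammaHom a).range :=
    Subgroup.closure_le _ |>.2 <| Set.range_subset_iff.2 fun i => ⟨_, rfl⟩
  rw [hγ]
  refine ⟨hΓ.trans (range_gammaHom_le_Iso14 a), fun p q => ?_, ?_, fun K hK => ?_⟩
  · obtain ⟨t, ht⟩ := exists_Z14_apply_eq a p q
    exact ⟨Z14 a t, ⟨Z14_mem_Iso14 a t, Subgroup.centralizer_le hΓ (Z14_mem_centralizer a t)⟩, ht⟩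
  · rintro g hg ⟨x, hx⟩
    obtain ⟨q, rfl⟩ := hΓ hg
    rw [eq_one_of_gammaHom_apply_eq_self hx, map_one]
  · have hind' : LinearIndependent ℝ fun i => (u i, w i) := by
      refine .of_comp (LinearMap.id.prodMap (LinearMap.inl ℝ (Fin m → ℝ) (Fin 2 → ℝ))) ?_
      convert hind using 1
      ext i : 1
      simp [hv]
    refine (hind'.finite_setOf_sum_zsmul_mem ((hK.prod hK).image (continuous_displacement a))
      |>.image fun n => gammaHom a (.ofAdd (∑ i, n i • (u i, w i)))).subset ?_
    rintro g ⟨hg, _, ⟨x, hx, rfl⟩, hgx⟩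
    obtain ⟨n, rfl⟩ := (gammaHom a).exists_eq_sum_zsmul_of_mem_closure_range _ hg
    exact ⟨n, ⟨(x, _), ⟨hx, hgx⟩, displacement_gammaHom_apply a _ x⟩, rfl⟩

/-- the group generated by the `γᵢ` is a subgroup of the isometry
group of the form, has transitive centralizer there, and acts freely and
properly discontinuously on `ℝⁿ`. -/
theorem homogeneous_from_data (m : ℕ) (hm : 1 ≤ m) (k : ℕ)
    (c : Fin k → ℝ) (u : Fin k → Fin 2 → ℝ) (w : Fin k → Fin m → ℝ)
    (v : Fin k → V14 m) (hv : ∀ i, v i = (u i, w i, 0))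
    (hind : LinearIndependent ℝ v)
    (hlam : ∀ lam : Fin k → ℝ, ∑ i, lam i • w i = 0 → ∑ i, lam i * c i = 0) :
    Subgroup.closure (Set.range fun i => gamma14 (c i) (v i)) ≤ Iso14 m ∧
    (∀ p q : V14 m, ∃ z ∈ Iso14 m ⊓ Subgroup.centralizer
        ((Subgroup.closure (Set.range fun i => gamma14 (c i) (v i)) : Subgroup _) :
          Set (V14 m ≃ᵃ[ℝ] V14 m)), z p = q) ∧
    (∀ g ∈ Subgroup.closure (Set.range fun i => gamma14 (c i) (v i)),
      (∃ x : V14 m, g x = x) → g = 1) ∧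
    (∀ K : Set (V14 m), IsCompact K →
      {g : V14 m ≃ᵃ[ℝ] V14 m |
        g ∈ Subgroup.closure (Set.range fun i => gamma14 (c i) (v i)) ∧
        ((g '' K) ∩ K).Nonempty}.Finite) :=
  homogeneous_from_data_general m k c u w v hv hind hlam

end
end
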